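/- arXiv:2010.11425 — 3 statements merged into one kernel-verified Lean document; each statement's English description precedes it below -/
import Mathlib

section
/- Let V = G + H where G = X^T X with X ∈ R^{t×d}, H is symmetric with ρ_min I ⪯ H ⪯ ρ_max I (ρ_min > 0), y = Xθ* + η, u = X^T y + h, and θ̃ = V^{-1} u. Then ||θ̃ − θ*||_V ≤ ||θ*||_H + ||X^T η||_{(G + ρ_min I)^{-1}} + ||h||_{H^{-1}}. -/
open Matrix

section Aux
variable {d : ℕ}

private lemma dot_symm {A : Matrix (Fin d) (Fin d) ℝ} (hA : Aᵀ = A) (v w : Fin d → ℝ) :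
    v ⬝ᵥ A *ᵥ w = w ⬝ᵥ A *ᵥ v := by
  rw [dotProduct_mulVec, ← mulVec_transpose, hA, dotProduct_comm]

private lemma herm_transpose {A : Matrix (Fin d) (Fin d) ℝ} (hA : A.IsHermitian) : Aᵀ = A := by
  rw [← conjTranspose_eq_transpose_of_trivial]; exact hA

private lemma dot_self_nonneg (v : Fin d → ℝ) : 0 ≤ v ⬝ᵥ v :=
  Finset.sum_nonneg fun i _ => mul_self_nonneg _

private lemma sqrt_dot_add (v w : Fin d → ℝ) :
    Real.sqrt ((v + w) ⬝ᵥ (v + w)) ≤ Real.sqrt (v ⬝ᵥ v) + Real.sqrt (w ⬝ᵥ w) := by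
  have hv := dot_self_nonneg v
  have hw := dot_self_nonneg w
  have hcs : v ⬝ᵥ w ≤ Real.sqrt (v ⬝ᵥ v) * Real.sqrt (w ⬝ᵥ w) := by
    have := Real.sum_mul_le_sqrt_mul_sqrt Finset.univ v w
    simpa [dotProduct, sq] using this
  rw [← Real.sqrt_sq (by positivity : (0:ℝ) ≤ Real.sqrt (v ⬝ᵥ v) + Real.sqrt (w ⬝ᵥ w))]
  apply Real.sqrt_le_sqrt
  have hexp : (v + w) ⬝ᵥ (v + w) = v ⬝ᵥ v + 2 * (v ⬝ᵥ w) + w ⬝ᵥ w := by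
    rw [add_dotProduct, dotProduct_add, dotProduct_add, dotProduct_comm w v]; ring
  rw [hexp]
  nlinarith [Real.sq_sqrt hv, Real.sq_sqrt hw, Real.sqrt_nonneg (v ⬝ᵥ v), Real.sqrt_nonneg (w ⬝ᵥ w)]

open scoped MatrixOrder

private lemma quad_eq_sq {A : Matrix (Fin d) (Fin d) ℝ} (hA : A.PosSemidef) (x : Fin d → ℝ) :
    x ⬝ᵥ A *ᵥ x = (CFC.sqrt A *ᵥ x) ⬝ᵥ (CFC.sqrt A *ᵥ x) := by
  have hB : (CFC.sqrt A)ᵀ = CFC.sqrt A := herm_transpose (CFC.sqrt_nonneg A).posSemidef.1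
  conv_lhs => rw [← CFC.sqrt_mul_sqrt_self A hA.nonneg]
  rw [← mulVec_mulVec, dotProduct_mulVec, ← mulVec_transpose, hB]

private lemma quad_triangle3 {A : Matrix (Fin d) (Fin d) ℝ} (hA : A.PosSemidef)
    (a b c : Fin d → ℝ) :
    Real.sqrt ((a + b + c) ⬝ᵥ A *ᵥ (a + b + c)) ≤
      Real.sqrt (a ⬝ᵥ A *ᵥ a) + Real.sqrt (b ⬝ᵥ A *ᵥ b) + Real.sqrt (c ⬝ᵥ A *ᵥ c) := by
  rw [quad_eq_sq hA (a + b + c), quad_eq_sq hA a, quad_eq_sq hA b, quad_eq_sq hA c,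
    mulVec_add, mulVec_add]
  calc Real.sqrt ((CFC.sqrt A *ᵥ a + CFC.sqrt A *ᵥ b + CFC.sqrt A *ᵥ c) ⬝ᵥ
        (CFC.sqrt A *ᵥ a + CFC.sqrt A *ᵥ b + CFC.sqrt A *ᵥ c))
      ≤ Real.sqrt ((CFC.sqrt A *ᵥ a + CFC.sqrt A *ᵥ b) ⬝ᵥ (CFC.sqrt A *ᵥ a + CFC.sqrt A *ᵥ b)) +
        Real.sqrt ((CFC.sqrt A *ᵥ c) ⬝ᵥ (CFC.sqrt A *ᵥ c)) := sqrt_dot_add _ _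
    _ ≤ _ := by
        have := sqrt_dot_add (CFC.sqrt A *ᵥ a) (CFC.sqrt A *ᵥ b)
        linarith

private lemma psd_quad_nonneg {A : Matrix (Fin d) (Fin d) ℝ} (hA : A.PosSemidef)
    (x : Fin d → ℝ) : 0 ≤ x ⬝ᵥ A *ᵥ x := by
  simpa using hA.dotProduct_mulVec_nonneg x

private lemma quad_inv_le {M V : Matrix (Fin d) (Fin d) ℝ} (hM : M.PosDef) (hV : V.PosDef)
    (hVM : (V - M).PosSemidef) (x : Fin d → ℝ) :
    x ⬝ᵥ V⁻¹ *ᵥ x ≤ x ⬝ᵥ M⁻¹ *ᵥ x := by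
  set y := V⁻¹ *ᵥ x with hy
  have hxy : V *ᵥ y = x := by
    rw [hy, mulVec_mulVec, mul_nonsing_inv _ hV.det_pos.ne'.isUnit, one_mulVec]
  have hMx : M *ᵥ (M⁻¹ *ᵥ x) = x := by
    rw [mulVec_mulVec, mul_nonsing_inv _ hM.det_pos.ne'.isUnit, one_mulVec]
  set z := y - M⁻¹ *ᵥ x with hz
  have h0 : 0 ≤ z ⬝ᵥ M *ᵥ z := psd_quad_nonneg hM.posSemidef z
  have hMz : M *ᵥ z = M *ᵥ y - x := by rw [hz, mulVec_sub, hMx]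
  have hMT : Mᵀ = M := herm_transpose hM.1
  have hsymm : (M⁻¹ *ᵥ x) ⬝ᵥ M *ᵥ y = y ⬝ᵥ x := by
    rw [dot_symm hMT, hMx]
  have hexp : z ⬝ᵥ M *ᵥ z = y ⬝ᵥ M *ᵥ y - y ⬝ᵥ x - (y ⬝ᵥ x - x ⬝ᵥ M⁻¹ *ᵥ x) := by
    rw [hz, hMz, sub_dotProduct, dotProduct_sub, dotProduct_sub, hsymm,
      dotProduct_comm (M⁻¹ *ᵥ x) x]
  have hyx : y ⬝ᵥ x = y ⬝ᵥ V *ᵥ y := by rw [hxy]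
  have hVinv : x ⬝ᵥ V⁻¹ *ᵥ x = y ⬝ᵥ V *ᵥ y := by
    rw [← hy, ← hyx, dotProduct_comm]
  have hsub : 0 ≤ y ⬝ᵥ V *ᵥ y - y ⬝ᵥ M *ᵥ y := by
    have := psd_quad_nonneg hVM y
    rwa [sub_mulVec, dotProduct_sub] at this
  rw [hexp, hyx] at h0
  linarith [hVinv, h0, hsub]

end Aux

/-- Deterministic error decomposition for regularized least squares: with `V = XᵀX + H`,
`ρ_min I ⪯ H ⪯ ρ_max I`, `y = Xθ* + η`, `u = Xᵀy + h`, `θ̃ = V⁻¹u`, one has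
`‖θ̃ − θ*‖_V ≤ ‖θ*‖_H + ‖Xᵀη‖_{(G+ρ_min I)⁻¹} + ‖h‖_{H⁻¹}`. -/
theorem private_lsq_error_decomposition {d t : ℕ} (ρmin ρmax : ℝ) (hρ : 0 < ρmin)
    (X : Matrix (Fin t) (Fin d) ℝ) (H : Matrix (Fin d) (Fin d) ℝ)
    (hHsymm : H.IsHermitian)
    (hHlo : (H - ρmin • (1 : Matrix (Fin d) (Fin d) ℝ)).PosSemidef)
    (hHhi : (ρmax • (1 : Matrix (Fin d) (Fin d) ℝ) - H).PosSemidef)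
    (G V : Matrix (Fin d) (Fin d) ℝ) (hG : G = Xᵀ * X) (hV : V = G + H) (hVpd : V.PosDef)
    (θstar h : Fin d → ℝ) (η : Fin t → ℝ)
    (y : Fin t → ℝ) (hy : y = X *ᵥ θstar + η)
    (u : Fin d → ℝ) (hu : u = Xᵀ *ᵥ y + h)
    (θtil : Fin d → ℝ) (hθ : θtil = V⁻¹ *ᵥ u) :
    Real.sqrt ((θtil - θstar) ⬝ᵥ V *ᵥ (θtil - θstar)) ≤
      Real.sqrt (θstar ⬝ᵥ H *ᵥ θstar) +
      Real.sqrt ((Xᵀ *ᵥ η) ⬝ᵥ (G + ρmin • (1 : Matrix (Fin d) (Fin d) ℝ))⁻¹ *ᵥ (Xᵀ *ᵥ η)) +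
      Real.sqrt (h ⬝ᵥ H⁻¹ *ᵥ h) := by
  -- positivity facts
  have hsmul : (ρmin • (1 : Matrix (Fin d) (Fin d) ℝ)).PosDef := by
    refine PosDef.of_dotProduct_mulVec_pos (by simp [Matrix.IsHermitian]) fun x hx => ?_
    have hxx : 0 < x ⬝ᵥ x :=
      lt_of_le_of_ne (dot_self_nonneg x) fun hc => hx (dotProduct_self_eq_zero.mp hc.symm)
    have hq : star x ⬝ᵥ (ρmin • (1 : Matrix (Fin d) (Fin d) ℝ)) *ᵥ x = ρmin * (x ⬝ᵥ x) := by
      simp [smul_mulVec, dotProduct_smul]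
    rw [hq]
    exact mul_pos hρ hxx
  have hGpsd : G.PosSemidef := by
    rw [hG, ← conjTranspose_eq_transpose_of_trivial]
    exact posSemidef_conjTranspose_mul_self X
  have hHpd : H.PosDef := by
    have := Matrix.PosDef.posSemidef_add hHlo hsmul
    simpa using this
  have hM2pd : (G + ρmin • (1 : Matrix (Fin d) (Fin d) ℝ)).PosDef :=
    Matrix.PosDef.posSemidef_add hGpsd hsmul
  have hVH : (V - H).PosSemidef := by
    have hVHeq : V - H = G := by rw [hV]; abel
    rw [hVHeq]; exact hGpsd
  have hVM2 : (V - (G + ρmin • (1 : Matrix (Fin d) (Fin d) ℝ))).PosSemidef := by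
    have : V - (G + ρmin • (1 : Matrix (Fin d) (Fin d) ℝ)) =
        H - ρmin • (1 : Matrix (Fin d) (Fin d) ℝ) := by rw [hV]; abel
    rw [this]; exact hHlo
  set w : Fin d → ℝ := Xᵀ *ᵥ η + h - H *ᵥ θstar with hwdef
  have hVdet := hVpd.det_pos.ne'.isUnit
  have hw : θtil - θstar = V⁻¹ *ᵥ w := by
    have hVinvV : V⁻¹ *ᵥ (V *ᵥ θstar) = θstar := by
      rw [mulVec_mulVec, nonsing_inv_mul _ hVdet, one_mulVec]
    have hu' : u = V *ᵥ θstar + w := by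
      rw [hu, hy, mulVec_add, mulVec_mulVec, ← hG, hV, add_mulVec, hwdef]
      abel
    rw [hθ, hu', mulVec_add, hVinvV]
    abel
  have hquad : (θtil - θstar) ⬝ᵥ V *ᵥ (θtil - θstar) = w ⬝ᵥ V⁻¹ *ᵥ w := by
    have hVw : V *ᵥ (V⁻¹ *ᵥ w) = w := by
      rw [mulVec_mulVec, mul_nonsing_inv _ hVdet, one_mulVec]
    rw [hw, hVw, dotProduct_comm]
  have hwsplit : w = -(H *ᵥ θstar) + Xᵀ *ᵥ η + h := by rw [hwdef]; abel
  have htri := quad_triangle3 hVpd.inv.posSemidef (-(H *ᵥ θstar)) (Xᵀ *ᵥ η) h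
  have hneg : (-(H *ᵥ θstar)) ⬝ᵥ V⁻¹ *ᵥ (-(H *ᵥ θstar)) =
      (H *ᵥ θstar) ⬝ᵥ V⁻¹ *ᵥ (H *ᵥ θstar) := by
    simp [mulVec_neg, dotProduct_neg, neg_dotProduct]
  -- term 1 bound
  have hb1 : (H *ᵥ θstar) ⬝ᵥ V⁻¹ *ᵥ (H *ᵥ θstar) ≤ θstar ⬝ᵥ H *ᵥ θstar := by
    have h1 := quad_inv_le hHpd hVpd hVH (H *ᵥ θstar)
    have h2 : (H *ᵥ θstar) ⬝ᵥ H⁻¹ *ᵥ (H *ᵥ θstar) = θstar ⬝ᵥ H *ᵥ θstar := by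
      rw [mulVec_mulVec, nonsing_inv_mul _ hHpd.det_pos.ne'.isUnit, one_mulVec,
        dotProduct_comm]
    rw [h2] at h1; exact h1
  have hb2 := quad_inv_le hM2pd hVpd hVM2 (Xᵀ *ᵥ η)
  have hb3 := quad_inv_le hHpd hVpd hVH h
  rw [hquad, hwsplit]
  refine le_trans htri ?_
  rw [hneg]
  have s1 := Real.sqrt_le_sqrt hb1
  have s2 := Real.sqrt_le_sqrt hb2
  have s3 := Real.sqrt_le_sqrt hb3
  linarith
end

section
/- Let V and W be positive definite d×d matrices with V ⪰ W ≻ 0, and let x be a vector. Then ||x||_{V^{-1}} ≤ ||x||_{W^{-1}} · sqrt(det(V)/det(W)). -/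
open Matrix

/-- Cauchy–Schwarz inequality for the bilinear form of a real PSD matrix. -/
lemma cs_psd_aux {d : ℕ} {W : Matrix (Fin d) (Fin d) ℝ} (hW : W.PosSemidef)
    (y z : Fin d → ℝ) :
    (y ⬝ᵥ W *ᵥ z) ^ 2 ≤ (y ⬝ᵥ W *ᵥ y) * (z ⬝ᵥ W *ᵥ z) := by
  have hsymm : z ⬝ᵥ W *ᵥ y = y ⬝ᵥ W *ᵥ z := by
    rw [dotProduct_mulVec, dotProduct_mulVec, ← mulVec_transpose, dotProduct_comm,
      dotProduct_mulVec, show Wᵀ = W from hW.1]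
  have key : ∀ t : ℝ, 0 ≤ (z ⬝ᵥ W *ᵥ z) * (t * t) + (2 * (y ⬝ᵥ W *ᵥ z)) * t + (y ⬝ᵥ W *ᵥ y) := by
    intro t
    have h := hW.dotProduct_mulVec_nonneg (y + t • z)
    simp only [star_trivial, mulVec_add, mulVec_smul, dotProduct_add, add_dotProduct,
      dotProduct_smul, smul_dotProduct, smul_eq_mul] at h
    rw [hsymm] at h
    ring_nf at h ⊢
    linarith
  have := discrim_le_zero key
  rw [discrim] at this
  nlinarith [this]

/-- If `M` is hermitian and `M - 1` is PSD then `1 ≤ det M`. -/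
lemma one_le_det_of_sub_one_aux {d : ℕ} {M : Matrix (Fin d) (Fin d) ℝ}
    (hM : M.IsHermitian) (h : (M - 1).PosSemidef) : 1 ≤ M.det := by
  have hev : ∀ i, 1 ≤ hM.eigenvalues i := by
    intro i
    set v : Fin d → ℝ := ⇑(hM.eigenvectorBasis i) with hvdef
    have hv : M *ᵥ v = hM.eigenvalues i • v := hM.mulVec_eigenvectorBasis i
    have hp := h.dotProduct_mulVec_nonneg v
    have hnorm : v ⬝ᵥ v = 1 := by
      have h1 := hM.eigenvectorBasis.orthonormal.1 i
      rw [EuclideanSpace.norm_eq, Real.sqrt_eq_one] at h1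
      simpa [dotProduct, pow_two, Real.norm_eq_abs, sq_abs, abs_mul_abs_self] using h1
    simp only [star_trivial, sub_mulVec, one_mulVec, hv, dotProduct_sub, dotProduct_smul,
      smul_eq_mul, hnorm, mul_one] at hp
    linarith
  rw [hM.det_eq_prod_eigenvalues]
  have hp : (1:ℝ) ≤ ∏ i, hM.eigenvalues i := by
    calc (1:ℝ) = ∏ _i : Fin d, 1 := by simp
    _ ≤ ∏ i, hM.eigenvalues i :=
      Finset.prod_le_prod (fun i _ => zero_le_one) (fun i _ => hev i)
  simpa using hp

/-- If `V ⪰ W ≻ 0` then `1 ≤ det V / det W`. -/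
lemma one_le_det_div_aux {d : ℕ} {V W : Matrix (Fin d) (Fin d) ℝ} (hV : V.PosDef) (hW : W.PosDef)
    (hVW : (V - W).PosSemidef) : 1 ≤ V.det / W.det := by
  obtain ⟨S, hS, hSS⟩ : ∃ S : Matrix (Fin d) (Fin d) ℝ, S.PosSemidef ∧ S * S = W := by
    open scoped MatrixOrder in
    exact ⟨CFC.sqrt W, nonneg_iff_posSemidef.mp (CFC.sqrt_nonneg W),
      CFC.sqrt_mul_sqrt_self W (nonneg_iff_posSemidef.mpr hW.posSemidef)⟩
  have hdetS : S.det * S.det = W.det := by rw [← det_mul, hSS]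
  have hdetS0 : S.det ≠ 0 := by
    intro h0; rw [h0, mul_zero] at hdetS; exact hW.det_pos.ne hdetS
  have hSH : (S⁻¹)ᴴ = S⁻¹ := by
    rw [conjTranspose_nonsing_inv, hS.1]
  set M := S⁻¹ * V * S⁻¹ with hMdef
  have hMps : M.PosSemidef := by
    have := hV.posSemidef.mul_mul_conjTranspose_same S⁻¹
    rwa [hSH] at this
  have hM1 : (M - 1).PosSemidef := by
    have := hVW.mul_mul_conjTranspose_same S⁻¹
    rw [hSH] at this
    have he : S⁻¹ * (V - W) * S⁻¹ = M - 1 := by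
      rw [Matrix.mul_sub, Matrix.sub_mul, hMdef, ← hSS]
      congr 1
      rw [← Matrix.mul_assoc, Matrix.mul_assoc (S⁻¹ * S),
        Matrix.mul_nonsing_inv _ (isUnit_iff_ne_zero.mpr hdetS0),
        Matrix.nonsing_inv_mul _ (isUnit_iff_ne_zero.mpr hdetS0), Matrix.mul_one]
    rwa [he] at this
  have hdetM : M.det = V.det / W.det := by
    rw [hMdef, det_mul, det_mul, det_nonsing_inv, Ring.inverse_eq_inv', ← hdetS]
    field_simp
  have := one_le_det_of_sub_one_aux hMps.1 hM1
  rwa [hdetM] at this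

/-- Determinant trick: if `V ⪰ W ≻ 0` then `‖x‖_{V⁻¹} ≤ ‖x‖_{W⁻¹} · sqrt(det V / det W)`. -/
theorem det_trick_norm_comparison {d : ℕ}
    (V W : Matrix (Fin d) (Fin d) ℝ) (hV : V.PosDef) (hW : W.PosDef)
    (hVW : (V - W).PosSemidef) (x : Fin d → ℝ) :
    Real.sqrt (x ⬝ᵥ V⁻¹ *ᵥ x) ≤ Real.sqrt (x ⬝ᵥ W⁻¹ *ᵥ x) * Real.sqrt (V.det / W.det) := by
  set y : Fin d → ℝ := V⁻¹ *ᵥ x with hydef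
  set z : Fin d → ℝ := W⁻¹ *ᵥ x with hzdef
  have hVy : V *ᵥ y = x := by
    rw [hydef, mulVec_mulVec, Matrix.mul_nonsing_inv _ (isUnit_iff_ne_zero.mpr hV.det_pos.ne'),
      one_mulVec]
  have hWz : W *ᵥ z = x := by
    rw [hzdef, mulVec_mulVec, Matrix.mul_nonsing_inv _ (isUnit_iff_ne_zero.mpr hW.det_pos.ne'),
      one_mulVec]
  set a : ℝ := x ⬝ᵥ V⁻¹ *ᵥ x with hadef
  set b : ℝ := x ⬝ᵥ W⁻¹ *ᵥ x with hbdef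
  have hyx : y ⬝ᵥ x = a := by rw [hadef, dotProduct_comm]
  have hzx : z ⬝ᵥ x = b := by rw [hbdef, dotProduct_comm]
  have hyWz : y ⬝ᵥ W *ᵥ z = a := by rw [hWz, hyx]
  have hyVy : y ⬝ᵥ V *ᵥ y = a := by rw [hVy, hyx]
  have hzWz : z ⬝ᵥ W *ᵥ z = b := by rw [hWz, hzx]
  have hWleV : y ⬝ᵥ W *ᵥ y ≤ a := by
    have := hVW.dotProduct_mulVec_nonneg y
    simp only [star_trivial, sub_mulVec, dotProduct_sub] at this
    linarith [hyVy ▸ this]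
  have hWy0 : 0 ≤ y ⬝ᵥ W *ᵥ y := by simpa using hW.posSemidef.dotProduct_mulVec_nonneg y
  have ha0 : 0 ≤ a := by simpa [hadef] using hV.posSemidef.inv.dotProduct_mulVec_nonneg x
  have hb0 : 0 ≤ b := by simpa [hbdef] using hW.posSemidef.inv.dotProduct_mulVec_nonneg x
  have hcs := cs_psd_aux hW.posSemidef y z
  rw [hyWz, hzWz] at hcs
  have hab : a ≤ b := by nlinarith [hcs, hWleV, hWy0, ha0, hb0]
  have hdet := one_le_det_div_aux hV hW hVW
  calc Real.sqrt a ≤ Real.sqrt b := Real.sqrt_le_sqrt hab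
  _ = Real.sqrt b * 1 := (mul_one _).symm
  _ ≤ Real.sqrt b * Real.sqrt (V.det / W.det) := by
      apply mul_le_mul_of_nonneg_left _ (Real.sqrt_nonneg b)
      rw [show (1:ℝ) = Real.sqrt 1 from (Real.sqrt_one).symm]
      exact Real.sqrt_le_sqrt hdet
end

section
/- Suppose each epoch between consecutive synchronizations at times T_{k-1} < T_k has length t_k and satisfies t_k · log(det(V_{k})/det(V_{k-1})) ≤ D, and the per-step regret in that epoch is bounded by r_{i,t} ≤ 2β·||x_{i,t}||_{V_{i,t}^{-1}} with Σ_{t=T_{k-1}}^{T_k} ||x_{i,t}||_{V_{i,t}^{-1}}^2 ≤ log(det(V_{i,T_k})/det(V_{i,T_{k-1}})). Then the total regret of M agents in that epoch is at most 2βM·sqrt(D). -/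
/-- Regret in an unsynchronized epoch: if each per-step regret satisfies
`r_{i,t} ≤ 2β √(w_{i,t})`, the potentials satisfy `∑_t w_{i,t} ≤ log(det V_{i,T_k}/det V_{i,T_{k-1}})`,
and the synchronization threshold gives `t_k · log(det V_{i,T_k}/det V_{i,T_{k-1}}) ≤ D`,
then the total regret of the `M` agents in the epoch is at most `2βM√D`. -/
theorem epoch_regret_bound (M tk : ℕ) (β D : ℝ) (hβ : 0 ≤ β) (hD : 0 ≤ D) (htk : 0 < tk)
    (r w : Fin M → Fin tk → ℝ) (detold detnew : Fin M → ℝ)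
    (hdetold : ∀ i, 0 < detold i) (hdetnew : ∀ i, 0 < detnew i)
    (hr0 : ∀ i t, 0 ≤ r i t) (hw0 : ∀ i t, 0 ≤ w i t)
    (hrw : ∀ i t, r i t ≤ 2 * β * Real.sqrt (w i t))
    (hsumw : ∀ i, ∑ t, w i t ≤ Real.log (detnew i / detold i))
    (hthresh : ∀ i, (tk : ℝ) * Real.log (detnew i / detold i) ≤ D) :
    ∑ i, ∑ t, r i t ≤ 2 * β * M * Real.sqrt D := by
  have key : ∀ i, ∑ t, r i t ≤ 2 * β * Real.sqrt D := by
    intro i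
    have h1 : ∑ t, r i t ≤ 2 * β * ∑ t, Real.sqrt (w i t) := by
      rw [Finset.mul_sum]
      exact Finset.sum_le_sum fun t _ => hrw i t
    have h2 : (∑ t, Real.sqrt (w i t)) ^ 2 ≤ (tk : ℝ) * ∑ t, (Real.sqrt (w i t)) ^ 2 := by
      simpa using sq_sum_le_card_mul_sum_sq (s := Finset.univ)
        (f := fun t => Real.sqrt (w i t))
    have h3 : ∑ t, (Real.sqrt (w i t)) ^ 2 = ∑ t, w i t := by
      refine Finset.sum_congr rfl fun t _ => Real.sq_sqrt (hw0 i t)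
    have h4 : (∑ t, Real.sqrt (w i t)) ^ 2 ≤ D := by
      calc (∑ t, Real.sqrt (w i t)) ^ 2 ≤ (tk : ℝ) * ∑ t, w i t := by rw [← h3]; exact h2
        _ ≤ (tk : ℝ) * Real.log (detnew i / detold i) :=
            mul_le_mul_of_nonneg_left (hsumw i) (by positivity)
        _ ≤ D := hthresh i
    have h5 : ∑ t, Real.sqrt (w i t) ≤ Real.sqrt D := by
      have := Real.sqrt_le_sqrt h4
      rwa [Real.sqrt_sq (Finset.sum_nonneg fun t _ => Real.sqrt_nonneg _)] at this
    calc ∑ t, r i t ≤ 2 * β * ∑ t, Real.sqrt (w i t) := h1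
      _ ≤ 2 * β * Real.sqrt D := mul_le_mul_of_nonneg_left h5 (by positivity)
  calc ∑ i, ∑ t, r i t ≤ ∑ _i : Fin M, 2 * β * Real.sqrt D :=
        Finset.sum_le_sum fun i _ => key i
    _ = 2 * β * M * Real.sqrt D := by
        simp [Finset.sum_const]; ring
end
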